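/- Let β ∈ ℝ be such that its binary expansion has no run of c consecutive zeros and no run of c consecutive ones (c ≥ 2). If t ∈ {0,1}^{n+c+2} satisfies |t − β↾(n+c+2)| ≤ 3 as dyadic integers, then the first n bits of t equal β↾n. -/

import Mathlib

/-- The `i`-th bit (starting from `i = 0`) of the base-two expansion of the
fractional part of `α`, chosen with infinitely many zeros. -/
noncomputable def rbit (α : ℝ) (i : ℕ) : Bool :=
  decide (⌊Int.fract α * 2 ^ (i + 1)⌋ % 2 = 1)

/-- The first `n` bits of the base-two expansion of `α - ⌊α⌋`. -/
noncomputable def restr (α : ℝ) (n : ℕ) : List Bool :=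
  (List.range n).map (rbit α)

/-- The value of a binary string read as a (big-endian) dyadic integer. -/
def intVal (u : List Bool) : ℕ :=
  u.foldl (fun a b => 2 * a + cond b 1 0) 0

/-- `0.u`: the value of a binary string read as a dyadic fraction. -/
noncomputable def fracVal (u : List Bool) : ℝ :=
  (intVal u : ℝ) / 2 ^ u.length

/-!
Split `β↾(n+c+2)` as `β↾n` followed by a window `w` of `c + 2` bits. Since the first `c` bits of
`w` are neither all zero nor all one, `3 < w < 2^(c+2) - 3` as integers, so a perturbation of
size at most `3` of the whole string cannot carry into, or borrow from, the leading `n` bits.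
-/

noncomputable def window (α : ℝ) (n m : ℕ) : List Bool :=
  (List.range m).map fun i => rbit α (n + i)

lemma window_add (α : ℝ) (n m k : ℕ) :
    window α n (m + k) = window α n m ++ window α (n + m) k := by
  simp only [window, List.range_add, List.map_append, List.map_map, Function.comp_def, add_assoc]

@[simp]
lemma length_window (α : ℝ) (n m : ℕ) : (window α n m).length = m := by
  simp [window]

lemma restr_eq_window (α : ℝ) (n : ℕ) : restr α n = window α 0 n := by
  simp [restr, window]

lemma restr_add (α : ℝ) (n m : ℕ) : restr α (n + m) = restr α n ++ window α n m := by
  simp only [restr_eq_window, window_add, zero_add]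

lemma mem_window {α : ℝ} {n m : ℕ} {b : Bool} :
    b ∈ window α n m ↔ ∃ i < m, rbit α (n + i) = b := by
  simp [window]

lemma foldl_eq_mul_two_pow_add_intVal (u : List Bool) (a : ℕ) :
    u.foldl (fun a b => 2 * a + cond b 1 0) a = a * 2 ^ u.length + intVal u := by
  induction u generalizing a with
  | nil => simp [intVal]
  | cons b u ih =>
    simp only [intVal, List.foldl_cons, List.length_cons] at ih ⊢
    rw [ih, ih (2 * 0 + _), pow_succ]
    ring

lemma intVal_cons (b : Bool) (u : List Bool) :
    intVal (b :: u) = cond b 1 0 * 2 ^ u.length + intVal u := by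
  rw [intVal, List.foldl_cons, foldl_eq_mul_two_pow_add_intVal]
  ring

lemma intVal_append (u v : List Bool) :
    intVal (u ++ v) = intVal u * 2 ^ v.length + intVal v := by
  rw [intVal, List.foldl_append, foldl_eq_mul_two_pow_add_intVal]
  rfl

lemma intVal_lt_two_pow (u : List Bool) : intVal u < 2 ^ u.length := by
  induction u with
  | nil => simp [intVal]
  | cons b u ih =>
    rw [intVal_cons, List.length_cons, pow_succ]
    cases b <;> simp <;> omega

lemma intVal_injective_of_length_eq {u v : List Bool} (hl : u.length = v.length)
    (h : intVal u = intVal v) : u = v := by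
  induction u generalizing v with
  | nil => simpa [eq_comm] using hl
  | cons b u ih =>
    obtain _ | ⟨b', v⟩ := v
    · simp at hl
    have hl : u.length = v.length := by simpa using hl
    have hu := intVal_lt_two_pow u
    have hv := intVal_lt_two_pow v
    rw [intVal_cons, intVal_cons, hl] at h
    rw [hl] at hu
    have hb : b = b' ∧ intVal u = intVal v := by
      cases b <;> cases b' <;> (simp_all; try omega)
    rw [hb.1, ih hl hb.2]

lemma one_le_intVal_of_true_mem {u : List Bool} (h : true ∈ u) : 1 ≤ intVal u := by
  induction u with
  | nil => simp at h
  | cons b u ih =>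
    rw [intVal_cons]
    rcases List.mem_cons.1 h with rfl | h
    · simp only [cond_true, one_mul]
      have := Nat.one_le_two_pow (n := u.length)
      omega
    · have := ih h
      omega

lemma intVal_add_two_le_of_false_mem {u : List Bool} (h : false ∈ u) :
    intVal u + 2 ≤ 2 ^ u.length := by
  induction u with
  | nil => simp at h
  | cons b u ih =>
    rw [intVal_cons, List.length_cons, pow_succ]
    have hu := intVal_lt_two_pow u
    rcases List.mem_cons.1 h with rfl | h
    · simp only [cond_false, zero_mul, zero_add]
      have := Nat.one_le_two_pow (n := u.length)
      omega
    · have := ih h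
      cases b <;> simp <;> omega

lemma two_pow_le_intVal_append {u : List Bool} (v : List Bool) (h : true ∈ u) :
    2 ^ v.length ≤ intVal (u ++ v) := by
  rw [intVal_append]
  calc 2 ^ v.length = 1 * 2 ^ v.length := (one_mul _).symm
    _ ≤ intVal u * 2 ^ v.length := Nat.mul_le_mul_right _ (one_le_intVal_of_true_mem h)
    _ ≤ _ := Nat.le_add_right _ _

lemma intVal_append_add_two_pow_lt {u : List Bool} (v : List Bool) (h : false ∈ u) :
    intVal (u ++ v) + 2 ^ v.length < 2 ^ (u ++ v).length := by
  rw [intVal_append, List.length_append, pow_add]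
  nlinarith [intVal_add_two_le_of_false_mem h, intVal_lt_two_pow v]

lemma Int.eq_of_abs_sub_le_of_margin {K q q' r s d : ℤ} (hr : 0 ≤ r) (hrK : r < K)
    (hs : d < s) (hsK : s + d < K) (h : |(q * K + r) - (q' * K + s)| ≤ d) : q = q' := by
  rw [abs_le] at h
  rcases lt_trichotomy q q' with hlt | heq | hgt
  · nlinarith [show q + 1 ≤ q' by omega]
  · exact heq
  · nlinarith [show q' + 1 ≤ q by omega]

theorem take_eq_of_abs_intVal_sub_le {t u v : List Bool} {d : ℤ}
    (hlen : t.length = u.length + v.length) (hlo : d < intVal v)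
    (hhi : intVal v + d < 2 ^ v.length) (h : |(intVal t : ℤ) - intVal (u ++ v)| ≤ d) :
    t.take u.length = u := by
  have hdrop : (t.drop u.length).length = v.length := by simp [hlen]
  have hsplit : intVal t = intVal (t.take u.length) * 2 ^ v.length + intVal (t.drop u.length) := by
    conv_lhs => rw [← List.take_append_drop u.length t]
    rw [intVal_append, hdrop]
  have hrem := intVal_lt_two_pow (t.drop u.length)
  rw [hdrop] at hrem
  refine intVal_injective_of_length_eq (by simp [hlen]) ?_
  rw [hsplit, intVal_append] at h
  push_cast at h
  exact_mod_cast Int.eq_of_abs_sub_le_of_margin (by positivity) (by exact_mod_cast hrem) hlo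
    (by exact_mod_cast hhi) h

theorem run_free_stability (β : ℝ) (c n : ℕ)
    (hzero : ¬ ∃ m : ℕ, ∀ i < c, rbit β (m + i) = false)
    (hone : ¬ ∃ m : ℕ, ∀ i < c, rbit β (m + i) = true)
    (t : List Bool) (ht : t.length = n + c + 2)
    (hdiff : |(intVal t : ℤ) - (intVal (restr β (n + c + 2)) : ℤ)| ≤ 3) :
    t.take n = restr β n := by
  push Not at hzero hone
  have htrue : true ∈ window β n c := by simpa [mem_window] using hzero n
  have hfalse : false ∈ window β n c := by simpa [mem_window] using hone n
  have hlo := two_pow_le_intVal_append (window β (n + c) 2) htrue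
  have hhi := intVal_append_add_two_pow_lt (window β (n + c) 2) hfalse
  rw [add_assoc, restr_add, window_add] at hdiff
  have hlen : (restr β n).length = n := by simp [restr]
  rw [length_window] at hlo hhi
  have htake := take_eq_of_abs_intVal_sub_le (by simp [ht, hlen]; omega)
    (by exact_mod_cast (show 3 < _ by omega)) (by exact_mod_cast (show _ + 3 < _ by omega)) hdiff
  rwa [hlen] at htake
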